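/- (Saturation/idempotence of the full transitive lookup, an auxiliary property of the deterministic transitive-closure computation of 'Complete the Cycle') For every typing environment Γ and qualifier q, the full transitive lookup is deterministically saturated: qtrans_Γ(qtrans_Γ(q)) = qtrans_Γ(q). -/
import Mathlib


/-- Variables are natural numbers (a fixed type with decidable equality). -/
abbrev Var := ℕ

/-- A qualifier is a finite set of variables. -/
abbrev Qual := Finset Var

/-- A typing environment is a finite list of bindings of a variable to a qualifier. -/
abbrev Env := List (Var × Qual)

/-- Cardinality of a qualifier `q` w.r.t. `Γ`: counts the bindings of `Γ`
whose bound variable lies in `q`. -/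
def card (Γ : Env) (q : Qual) : ℕ :=
  match Γ with
  | [] => 0
  | (x, _) :: Γ' => if x ∈ q then 1 + card Γ' q else card Γ' q

/-- One-step reachability: `Γ ⊢ x ↝ y` iff some binding `(x, p) ∈ Γ` has `y ∈ p`. -/
def reaches (Γ : Env) (x y : Var) : Prop :=
  ∃ p : Qual, (x, p) ∈ Γ ∧ y ∈ p

/-- Transitive reachability `Γ ⊢ x ↝* y`: the transitive closure of `reaches`. -/
inductive reachesStar (Γ : Env) : Var → Var → Prop
  | base {x y : Var} : reaches Γ x y → reachesStar Γ x y
  | step {x z y : Var} : reaches Γ x z → reachesStar Γ z y → reachesStar Γ x y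

/-- One-step expansion: `step_Γ(q) = q ∪ ⋃_{x ∈ q} { y | Γ ⊢ x ↝ y }`. -/
def stepQ (Γ : Env) (q : Qual) : Qual :=
  q ∪ Γ.toFinset.biUnion (fun b => if b.1 ∈ q then b.2 else ∅)

/-- Fuel-indexed transitive lookup. -/
def qtransN (Γ : Env) : ℕ → Qual → Qual
  | 0, q => q
  | n + 1, q => qtransN Γ n (stepQ Γ q)

/-- Full transitive lookup: iterate `|Γ|` times. -/
def qtrans (Γ : Env) (q : Qual) : Qual := qtransN Γ Γ.length q

/-- Propositional saturation: `⋃_{x ∈ q} { y | Γ ⊢ x ↝* y } ⊆ q`. -/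
def psat (Γ : Env) (q : Qual) : Prop :=
  ∀ x ∈ q, ∀ y : Var, reachesStar Γ x y → y ∈ q

lemma stepQ_eq_of_subset {Γ : Env} {q : Qual}
    (h : Γ.toFinset.biUnion (fun b => if b.1 ∈ q then b.2 else ∅) ⊆ q) :
    stepQ Γ q = q := by
  simp [stepQ, Finset.union_eq_left.mpr h]

lemma qtransN_fixed {Γ : Env} {q : Qual} (h : stepQ Γ q = q) :
    ∀ n, qtransN Γ n q = q
  | 0 => rfl
  | n + 1 => by simp [qtransN, h, qtransN_fixed h n]

lemma card_mono (Γ : Env) {q r : Qual} (h : q ⊆ r) : card Γ q ≤ card Γ r := by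
  induction Γ with
  | nil => simp [card]
  | cons b Γ' ih =>
    obtain ⟨x, p⟩ := b
    simp only [card]
    by_cases hq : x ∈ q
    · rw [if_pos hq, if_pos (h hq)]; omega
    · rw [if_neg hq]; split <;> omega

lemma card_succ_le (Γ : Env) {q r : Qual} (h : q ⊆ r) {x : Var} {p : Qual}
    (hmem : (x, p) ∈ Γ) (hxr : x ∈ r) (hxq : x ∉ q) :
    card Γ q + 1 ≤ card Γ r := by
  induction Γ with
  | nil => simp at hmem
  | cons b Γ' ih =>
    obtain ⟨y, s⟩ := b
    simp only [card]
    rcases List.mem_cons.mp hmem with heq | htail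
    · injection heq with h1 h2
      subst h1
      rw [if_neg hxq, if_pos hxr]
      have := card_mono Γ' h
      omega
    · by_cases hyq : y ∈ q
      · rw [if_pos hyq, if_pos (h hyq)]
        have := ih htail
        omega
      · rw [if_neg hyq]
        have := ih htail
        split <;> omega

lemma card_le_length (Γ : Env) (q : Qual) : card Γ q ≤ Γ.length := by
  induction Γ with
  | nil => simp [card]
  | cons b Γ' ih =>
    obtain ⟨x, p⟩ := b
    simp only [card, List.length_cons]
    split <;> omega

lemma card_pos_of_mem {Γ : Env} {q : Qual} {x : Var} {p : Qual}
    (hmem : (x, p) ∈ Γ) (hx : x ∈ q) : 1 ≤ card Γ q := by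
  induction Γ with
  | nil => simp at hmem
  | cons b Γ' ih =>
    obtain ⟨y, s⟩ := b
    simp only [card]
    rcases List.mem_cons.mp hmem with heq | htail
    · injection heq with h1 h2
      subst h1
      rw [if_pos hx]; omega
    · have := ih htail
      split <;> omega

lemma stepQ_eq_of_card_zero {Γ : Env} {q : Qual} (h : card Γ q = 0) :
    stepQ Γ q = q := by
  apply stepQ_eq_of_subset
  intro y hy
  obtain ⟨b, hb, hyb⟩ := Finset.mem_biUnion.mp hy
  by_cases hbq : b.1 ∈ q
  · have : (b.1, b.2) ∈ Γ := by simpa using List.mem_toFinset.mp hb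
    have := card_pos_of_mem this hbq
    omega
  · rw [if_neg hbq] at hyb
    simp at hyb

lemma step_dichotomy (Γ : Env) (q : Qual) :
    stepQ Γ (stepQ Γ q) = stepQ Γ q ∨ card Γ q + 1 ≤ card Γ (stepQ Γ q) := by
  by_cases h : stepQ Γ (stepQ Γ q) = stepQ Γ q
  · exact Or.inl h
  · right
    have hns : ¬ (Γ.toFinset.biUnion (fun b => if b.1 ∈ stepQ Γ q then b.2 else ∅)
        ⊆ stepQ Γ q) := fun hs => h (stepQ_eq_of_subset hs)
    obtain ⟨y, hyU, hyn⟩ := Finset.not_subset.mp hns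
    obtain ⟨b, hb, hyb⟩ := Finset.mem_biUnion.mp hyU
    by_cases hbs : b.1 ∈ stepQ Γ q
    · rw [if_pos hbs] at hyb
      have hbq : b.1 ∉ q := by
        intro hbq
        apply hyn
        apply Finset.mem_union_right
        exact Finset.mem_biUnion.mpr ⟨b, hb, by rw [if_pos hbq]; exact hyb⟩
      have hmem : (b.1, b.2) ∈ Γ := by simpa using List.mem_toFinset.mp hb
      exact card_succ_le Γ Finset.subset_union_left hmem hbs hbq
    · rw [if_neg hbs] at hyb
      simp at hyb

lemma qtrans_main (Γ : Env) : ∀ n q, stepQ Γ (qtransN Γ n q) = qtransN Γ n q ∨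
    n + card Γ q ≤ card Γ (qtransN Γ n q)
  | 0, q => Or.inr (by simp [qtransN])
  | n + 1, q => by
    show stepQ Γ (qtransN Γ n (stepQ Γ q)) = qtransN Γ n (stepQ Γ q) ∨
      n + 1 + card Γ q ≤ card Γ (qtransN Γ n (stepQ Γ q))
    by_cases hf : stepQ Γ (stepQ Γ q) = stepQ Γ q
    · left
      rw [qtransN_fixed hf n]
      exact hf
    · have hc : card Γ q + 1 ≤ card Γ (stepQ Γ q) :=
        (step_dichotomy Γ q).resolve_left hf
      rcases qtrans_main Γ n (stepQ Γ q) with h | h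
      · exact Or.inl h
      · right; omega

/-- Saturation/idempotence of the full transitive lookup. -/
theorem qtrans_idem (Γ : Env) (q : Qual) :
    qtrans Γ (qtrans Γ q) = qtrans Γ q := by
  have hfix : stepQ Γ (qtrans Γ q) = qtrans Γ q := by
    rcases qtrans_main Γ Γ.length q with h | h
    · exact h
    · have h1 := card_le_length Γ (qtransN Γ Γ.length q)
      have hq0 : card Γ q = 0 := by omega
      have hfq : stepQ Γ q = q := stepQ_eq_of_card_zero hq0
      show stepQ Γ (qtransN Γ Γ.length q) = qtransN Γ Γ.length q
      rw [qtransN_fixed hfq]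
      exact hfq
  exact qtransN_fixed hfix Γ.length
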